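/- Let λ ≥ 1. A basis is (λ, RPGII) if and only if it is quasi-greedy and (λ, RPSLC). -/

import Mathlib

open Finset Filter

noncomputable section

variable {X : Type*} [NormedAddCommGroup X] [NormedSpace ℝ X]

/-- Projection `P_A x = ∑_{n ∈ A} e_n^*(x) e_n`. -/
def proj (f : ℕ → X →L[ℝ] ℝ) (e : ℕ → X) (A : Finset ℕ) (x : X) : X :=
  ∑ n ∈ A, f n x • e n

/-- `Λ` is a greedy set of `x`. -/
def GreedySet (f : ℕ → X →L[ℝ] ℝ) (x : X) (Λ : Finset ℕ) : Prop :=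
  ∀ n ∈ Λ, ∀ m, m ∉ Λ → |f m x| ≤ |f n x|

/-- A (biorthogonal, norm-bounded, fundamental) basis system. -/
structure BasisSystem (f : ℕ → X →L[ℝ] ℝ) (e : ℕ → X) : Prop where
  biorth : ∀ n m, f n (e m) = if n = m then (1 : ℝ) else 0
  dense : Dense (Submodule.span ℝ (Set.range e) : Set X)
  bounded : ∃ c₁ c₂ : ℝ, 0 < c₁ ∧ ∀ n, c₁ ≤ ‖e n‖ ∧ ‖e n‖ ≤ c₂ ∧ ‖f n‖ ≤ c₂

/-- `σ̌^Λ_m(x)`: inf of `‖x - P_I x‖` over `I = ∅` or intervals `I` with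
`Λ ≤ max I` and `|I| ≤ m`. -/
def checkSigma (f : ℕ → X →L[ℝ] ℝ) (e : ℕ → X) (Λ : Finset ℕ) (m : ℕ) (x : X) : ℝ :=
  sInf {r : ℝ | ∃ I : Finset ℕ,
    (I = ∅ ∨ ∃ a b : ℕ, a ≤ b ∧ I = Finset.Icc a b ∧ ∀ n ∈ Λ, n ≤ b) ∧
    I.card ≤ m ∧ r = ‖x - proj f e I x‖}

/-- `σ̂^Λ_m(x)`: inf of `‖x - P_I x‖` over `I = ∅` or intervals `I` with
`min I ≤ Λ` and `|I| ≤ m`. -/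
def hatSigma (f : ℕ → X →L[ℝ] ℝ) (e : ℕ → X) (Λ : Finset ℕ) (m : ℕ) (x : X) : ℝ :=
  sInf {r : ℝ | ∃ I : Finset ℕ,
    (I = ∅ ∨ ∃ a b : ℕ, a ≤ b ∧ I = Finset.Icc a b ∧ ∀ n ∈ Λ, a ≤ n) ∧
    I.card ≤ m ∧ r = ‖x - proj f e I x‖}

/-- `σ̃^{R,Λ}_m(x)`: inf of `‖x - P_A x‖` over `|A| ≤ m`, `A > Λ`. -/
def revSigma (f : ℕ → X →L[ℝ] ℝ) (e : ℕ → X) (Λ : Finset ℕ) (m : ℕ) (x : X) : ℝ :=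
  sInf {r : ℝ | ∃ A : Finset ℕ, A.card ≤ m ∧ (∀ n ∈ Λ, ∀ a ∈ A, n < a) ∧
    r = ‖x - proj f e A x‖}

/-- Reverse partially greedy with constant `C`. -/
def RPG (f : ℕ → X →L[ℝ] ℝ) (e : ℕ → X) (C : ℝ) : Prop :=
  ∀ (x : X) (m : ℕ) (Λ : Finset ℕ), Λ.card = m → GreedySet f x Λ →
    ‖x - proj f e Λ x‖ ≤ C * revSigma f e Λ m x

/-- `(λ, RPGII)` with constant `C`. -/
def RPGII (f : ℕ → X →L[ℝ] ℝ) (e : ℕ → X) (l C : ℝ) : Prop :=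
  ∀ (x : X) (m : ℕ) (Λ : Finset ℕ), Λ.card = ⌈l * (m : ℝ)⌉₊ → GreedySet f x Λ →
    ‖x - proj f e Λ x‖ ≤ C * checkSigma f e Λ m x

/-- Quasi-greedy with constant `C`. -/
def QG (f : ℕ → X →L[ℝ] ℝ) (e : ℕ → X) (C : ℝ) : Prop :=
  ∀ (x : X) (Λ : Finset ℕ), GreedySet f x Λ → ‖proj f e Λ x‖ ≤ C * ‖x‖

/-- Suppression quasi-greedy with constant `C`. -/
def SuppQG (f : ℕ → X →L[ℝ] ℝ) (e : ℕ → X) (C : ℝ) : Prop :=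
  ∀ (x : X) (Λ : Finset ℕ), GreedySet f x Λ → ‖x - proj f e Λ x‖ ≤ C * ‖x‖

/-- Reverse conservative with constant `C`. -/
def RevConservative (e : ℕ → X) (C : ℝ) : Prop :=
  ∀ A B : Finset ℕ, (∀ b ∈ B, ∀ a ∈ A, b < a) → A.card ≤ B.card →
    ‖∑ n ∈ A, e n‖ ≤ C * ‖∑ n ∈ B, e n‖

/-- `s(A) = max A - min A + 1` (and `s(∅) = 0`). -/
def spread (A : Finset ℕ) : ℕ :=
  if h : A.Nonempty then A.max' h - A.min' h + 1 else 0

/-- `(λ, reverse conservative of type II)` with constant `C`. -/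
def RevConsII (e : ℕ → X) (l C : ℝ) : Prop :=
  ∀ A B : Finset ℕ, (l - 1) * spread A + (A.card : ℝ) ≤ (B.card : ℝ) →
    (∀ b ∈ B, ∀ a ∈ A, b < a) → ‖∑ n ∈ A, e n‖ ≤ C * ‖∑ n ∈ B, e n‖

/-- `x` surrounds `A`: `supp x ∩ [min A, max A] = ∅` (vacuous for `A = ∅`). -/
def Surrounds (f : ℕ → X →L[ℝ] ℝ) (x : X) (A : Finset ℕ) : Prop :=
  ∀ a ∈ A, ∀ b ∈ A, ∀ n, a ≤ n → n ≤ b → f n x = 0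

/-- `(λ, RPSLC)` with constant `Δ`. -/
def RPSLC (f : ℕ → X →L[ℝ] ℝ) (e : ℕ → X) (l Δ : ℝ) : Prop :=
  ∀ x : X, (∀ n, |f n x| ≤ 1) →
    ∀ ε δ : ℕ → ℝ, (∀ n, |ε n| = 1) → (∀ n, |δ n| = 1) →
    ∀ A B : Finset ℕ, (l - 1) * spread A + (A.card : ℝ) ≤ (B.card : ℝ) →
    (∀ n ∈ B, f n x = 0) → (∀ b ∈ B, ∀ a ∈ A, b < a) → Surrounds f x A →
    ‖x + ∑ n ∈ A, ε n • e n‖ ≤ Δ * ‖x + ∑ n ∈ B, δ n • e n‖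

/-!
(⇒) Padding a greedy set with at most `λ` large coefficients placed after it brings its size to
some `⌈λm⌉`; comparing with the empty interval shows that RPGII implies suppression
quasi-greediness. For RPSLC, fill the gaps of `A` with ones and keep `⌈(λ-1)s(A)⌉ + |A|`
elements `B'` of `B`: the gaps together with `B'` form a greedy set of size `⌈λ s(A)⌉` whose
removal leaves `x + 1_{εA}`, while removing the interval `[min A, max A]` leaves `x + 1_{δB'}`;
quasi-greediness then passes from `B'` to `B`.

(⇐) For an interval `I`, put `y = x - P_I x`, `B = Λ \ I`, `E = I \ Λ`, so that
`x - P_Λ x = (y - P_B y) + P_E x`. The coefficients of `x` on `E` are at most the smallest one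
`t` on `B`, so by convexity `P_E x` may be replaced by `t 1_{εE}`; RPSLC trades this for
`t 1_{δB}`, whose norm quasi-greediness bounds by a multiple of `‖y‖`.
-/

lemma norm_add_smul_le_max (w u : X) {a b c : ℝ} (hc : c ∈ Set.Icc a b) :
    ‖w + c • u‖ ≤ max ‖w + a • u‖ ‖w + b • u‖ := by
  have hconv : ConvexOn ℝ Set.univ fun r : ℝ => ‖w + r • u‖ :=
    ((convexOn_norm convex_univ).translate_right w).comp_linearMap
      (LinearMap.toSpanSingleton ℝ X u)
  rw [← segment_eq_Icc (hc.1.trans hc.2)] at hc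
  exact hconv.le_on_segment (Set.mem_univ a) (Set.mem_univ b) hc

lemma exists_sign_norm_add_sum_smul_le {ι : Type*} [DecidableEq ι] (u : ι → X) (a : ι → ℝ)
    {t : ℝ} (E : Finset ι) (v : X) (ha : ∀ n ∈ E, |a n| ≤ t) :
    ∃ ε : ι → ℝ, (∀ n, |ε n| = 1) ∧
      ‖v + ∑ n ∈ E, a n • u n‖ ≤ ‖v + t • ∑ n ∈ E, ε n • u n‖ := by
  induction E using Finset.induction_on generalizing v with
  | empty => exact ⟨fun _ => 1, by simp, by simp⟩
  | @insert k E hk ih =>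
    obtain ⟨ε, hε, hle⟩ := ih (v + a k • u k) fun n hn => ha n (mem_insert_of_mem hn)
    set w := v + t • ∑ n ∈ E, ε n • u n
    have hmax : ‖w + a k • u k‖ ≤ max ‖w + (-t) • u k‖ ‖w + t • u k‖ :=
      norm_add_smul_le_max w (u k) (abs_le.mp (ha k (mem_insert_self k E)))
    obtain ⟨s, hs, hks⟩ : ∃ s : ℝ, |s| = 1 ∧ ‖w + a k • u k‖ ≤ ‖w + (s * t) • u k‖ := by
      rcases le_max_iff.mp hmax with h | h
      · exact ⟨-1, by norm_num, by simpa using h⟩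
      · exact ⟨1, by norm_num, by simpa using h⟩
    refine ⟨Function.update ε k s, fun n => ?_, ?_⟩
    · rcases eq_or_ne n k with rfl | h
      · simpa using hs
      · simpa [h] using hε n
    have hsum : ∑ n ∈ insert k E, Function.update ε k s n • u n
        = s • u k + ∑ n ∈ E, ε n • u n := by
      rw [sum_insert hk, Function.update_self]
      congr 1
      exact sum_congr rfl fun n hn => by rw [Function.update_of_ne (ne_of_mem_of_not_mem hn hk)]
    calc ‖v + ∑ n ∈ insert k E, a n • u n‖
        = ‖v + a k • u k + ∑ n ∈ E, a n • u n‖ := by rw [sum_insert hk, add_assoc]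
      _ ≤ ‖v + a k • u k + t • ∑ n ∈ E, ε n • u n‖ := hle
      _ = ‖w + a k • u k‖ := by congr 1; simp only [w]; abel
      _ ≤ ‖w + (s * t) • u k‖ := hks
      _ = ‖v + t • ∑ n ∈ insert k E, Function.update ε k s n • u n‖ := by
          rw [hsum, smul_add, smul_smul, mul_comm]; simp only [w]; abel_nf

/-- Unlike `Real.sign`, this is `1` at `0`, so it is a sign everywhere. -/
def unitSign (r : ℝ) : ℝ := if r < 0 then -1 else 1

lemma abs_unitSign (r : ℝ) : |unitSign r| = 1 := by
  unfold unitSign; split_ifs <;> norm_num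

lemma abs_mul_unitSign (r : ℝ) : |r| * unitSign r = r := by
  unfold unitSign; split_ifs with h
  · rw [abs_of_neg h]; ring
  · rw [abs_of_nonneg (not_lt.mp h), mul_one]

lemma spread_eq_card_Icc {A : Finset ℕ} (hA : A.Nonempty) :
    spread A = (Icc (A.min' hA) (A.max' hA)).card := by
  rw [Nat.card_Icc, spread, dif_pos hA]
  have := A.min'_le_max' hA
  omega

lemma spread_le_card_Icc {A : Finset ℕ} {a b : ℕ} (h : A ⊆ Icc a b) :
    spread A ≤ (Icc a b).card := by
  rcases A.eq_empty_or_nonempty with rfl | hA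
  · simp [spread]
  have hmin := mem_Icc.mp (h (A.min'_mem hA))
  have hmax := mem_Icc.mp (h (A.max'_mem hA))
  rw [spread_eq_card_Icc hA, Nat.card_Icc, Nat.card_Icc]
  omega

lemma sub_one_mul_spread_sdiff_add_card_le {l : ℝ} (hl : 1 ≤ l) {m : ℕ} {Λ : Finset ℕ}
    (hΛ : l * m ≤ Λ.card) {a b : ℕ} (hm : (Icc a b).card ≤ m) :
    (l - 1) * spread (Icc a b \ Λ) + ((Icc a b \ Λ).card : ℝ) ≤ (Λ \ Icc a b).card := by
  have hE := card_sdiff_add_card_inter (Icc a b) Λ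
  have hB := card_sdiff_add_card_inter Λ (Icc a b)
  rw [inter_comm] at hB
  have hspread : (spread (Icc a b \ Λ) : ℝ) ≤ m := by
    exact_mod_cast (spread_le_card_Icc sdiff_subset).trans hm
  have hIm : ((Icc a b).card : ℝ) ≤ m := by exact_mod_cast hm
  have hE' : ((Icc a b \ Λ).card : ℝ) + (Icc a b ∩ Λ).card = (Icc a b).card := by
    exact_mod_cast hE
  have hB' : ((Λ \ Icc a b).card : ℝ) + (Icc a b ∩ Λ).card = Λ.card := by exact_mod_cast hB
  nlinarith

lemma card_union_Icc_sdiff {l : ℝ} (hl : 1 ≤ l) {A B' : Finset ℕ} (hA : A.Nonempty)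
    (hB'card : B'.card = ⌈(l - 1) * spread A⌉₊ + A.card)
    (hdisj : Disjoint B' (Icc (A.min' hA) (A.max' hA))) :
    (B' ∪ (Icc (A.min' hA) (A.max' hA) \ A)).card = ⌈l * (spread A : ℕ)⌉₊ := by
  have hAIc : A ⊆ Icc (A.min' hA) (A.max' hA) := fun n hn =>
    mem_Icc.mpr ⟨min'_le A n hn, le_max' A n hn⟩
  have hIc := spread_eq_card_Icc hA
  have hAle := card_le_card hAIc
  rw [card_union_of_disjoint (hdisj.mono_right sdiff_subset), hB'card,
    card_sdiff_of_subset hAIc, show l * (spread A : ℕ) = (l - 1) * spread A + spread A by ring,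
    Nat.ceil_add_natCast (mul_nonneg (sub_nonneg.mpr hl) (Nat.cast_nonneg _))]
  omega

lemma lt_of_mem_sdiff_Icc_of_mem_Icc_sdiff {Λ : Finset ℕ} {a b : ℕ} (hΛb : ∀ n ∈ Λ, n ≤ b)
    {n k : ℕ} (hn : n ∈ Λ \ Icc a b) (hk : k ∈ Icc a b \ Λ) : n < k := by
  have hnI := (mem_sdiff.mp hn).2
  have hkI := mem_Icc.mp (mem_sdiff.mp hk).1
  have := hΛb n (mem_sdiff.mp hn).1
  rw [mem_Icc] at hnI
  omega

lemma exists_le_ceil_mul_le {l : ℝ} (hl : 0 < l) (k : ℕ) :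
    ∃ m : ℕ, k ≤ ⌈l * m⌉₊ ∧ (⌈l * m⌉₊ : ℝ) ≤ k + l := by
  have hex : ∃ m : ℕ, k ≤ ⌈l * m⌉₊ := by
    refine ⟨⌈k / l⌉₊, ?_⟩
    have h : (k : ℝ) ≤ l * ⌈k / l⌉₊ := by
      rw [← div_le_iff₀' hl]; exact Nat.le_ceil _
    exact_mod_cast h.trans (Nat.le_ceil _)
  refine ⟨Nat.find hex, Nat.find_spec hex, ?_⟩
  cases h : Nat.find hex with
  | zero => simp only [CharP.cast_eq_zero, mul_zero, Nat.ceil_zero]; positivity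
  | succ m =>
    have hprev : ⌈l * m⌉₊ < k := not_le.mp (Nat.find_min hex (by omega))
    have hceil := Nat.ceil_lt_add_one (show 0 ≤ l * ((m + 1 : ℕ) : ℝ) by positivity)
    have hprev' : (⌈l * m⌉₊ : ℝ) + 1 ≤ k := by exact_mod_cast hprev
    have := Nat.le_ceil (l * m)
    push_cast at hceil ⊢
    linarith

section

variable {f : ℕ → X →L[ℝ] ℝ} {e : ℕ → X}

lemma proj_congr {A : Finset ℕ} {x y : X} (h : ∀ n ∈ A, f n x = f n y) :
    proj f e A x = proj f e A y :=
  sum_congr rfl fun n hn => by rw [h n hn]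

lemma proj_eq_zero {A : Finset ℕ} {x : X} (h : ∀ n ∈ A, f n x = 0) : proj f e A x = 0 :=
  sum_eq_zero fun n hn => by rw [h n hn, zero_smul]

lemma proj_add (A : Finset ℕ) (x y : X) : proj f e A (x + y) = proj f e A x + proj f e A y := by
  simp only [proj, map_add, add_smul, sum_add_distrib]

lemma proj_add_proj_sdiff (A B : Finset ℕ) (x : X) :
    proj f e A x + proj f e (B \ A) x = proj f e (A ∪ B) x := by
  rw [proj, proj, proj, ← sum_union disjoint_sdiff, union_sdiff_self_eq_union]

lemma abs_coeff_le {c : ℝ} {n : ℕ} (hc : ‖f n‖ ≤ c) (x : X) : |f n x| ≤ c * ‖x‖ :=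
  ((f n).le_opNorm x).trans (mul_le_mul_of_nonneg_right hc (norm_nonneg x))

lemma norm_sum_smul_le {c K : ℝ} (he : ∀ n, ‖e n‖ ≤ c) (B : Finset ℕ) {a : ℕ → ℝ}
    (ha : ∀ n ∈ B, |a n| ≤ K) : ‖∑ n ∈ B, a n • e n‖ ≤ B.card * (K * c) := by
  refine (norm_sum_le_of_le B fun n hn => ?_).trans_eq (by rw [sum_const, nsmul_eq_mul])
  rw [norm_smul, Real.norm_eq_abs]
  exact mul_le_mul (ha n hn) (he n) (norm_nonneg _) ((abs_nonneg _).trans (ha n hn))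

lemma norm_proj_le {c : ℝ} (hc : ∀ n, ‖e n‖ ≤ c ∧ ‖f n‖ ≤ c) (A : Finset ℕ) (x : X) :
    ‖proj f e A x‖ ≤ A.card * (c * ‖x‖ * c) :=
  norm_sum_smul_le (fun n => (hc n).1) A fun n _ => abs_coeff_le (hc n).2 x

lemma coeff_sum_smul (hb : BasisSystem f e) (S : Finset ℕ) (c : ℕ → ℝ) (n : ℕ) :
    f n (∑ k ∈ S, c k • e k) = if n ∈ S then c n else 0 := by
  simp only [map_sum, map_smul, hb.biorth, smul_eq_mul, mul_ite, mul_one, mul_zero,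
    sum_ite_eq]

lemma coeff_sub_proj (hb : BasisSystem f e) (A : Finset ℕ) (x : X) (n : ℕ) :
    f n (x - proj f e A x) = if n ∈ A then 0 else f n x := by
  rw [map_sub, proj, coeff_sum_smul hb]
  split_ifs <;> simp

lemma coeff_sub_proj_sub_proj (hb : BasisSystem f e) (I B : Finset ℕ) (x : X) (n : ℕ) :
    f n (x - proj f e I x - proj f e B (x - proj f e I x))
      = if n ∈ B ∪ I then 0 else f n x := by
  rw [coeff_sub_proj hb, coeff_sub_proj hb]
  by_cases hB : n ∈ B <;> by_cases hI : n ∈ I <;> simp [hB, hI]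

lemma proj_sum_smul (hb : BasisSystem f e) (A S : Finset ℕ) (c : ℕ → ℝ) :
    proj f e A (∑ n ∈ S, c n • e n) = ∑ n ∈ A ∩ S, c n • e n := by
  simp only [proj, coeff_sum_smul hb, ite_smul, zero_smul]
  exact sum_ite_mem A S _

lemma add_sum_smul_sub_proj (hb : BasisSystem f e) {A S : Finset ℕ} (hAS : A ⊆ S) {x : X}
    (hx : ∀ n ∈ A, f n x = 0) (c : ℕ → ℝ) :
    x + ∑ n ∈ S, c n • e n - proj f e A (x + ∑ n ∈ S, c n • e n)
      = x + ∑ n ∈ S \ A, c n • e n := by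
  rw [proj_add, proj_sum_smul hb, inter_eq_left.mpr hAS, proj_eq_zero hx, ← sum_sdiff hAS]
  abel

lemma sub_proj_eq_sub_proj_sdiff_add_proj_sdiff (hb : BasisSystem f e) (Λ I : Finset ℕ)
    (x : X) :
    x - proj f e Λ x
      = (x - proj f e I x) - proj f e (Λ \ I) (x - proj f e I x) + proj f e (I \ Λ) x := by
  have hPB : proj f e (Λ \ I) (x - proj f e I x) = proj f e (Λ \ I) x :=
    proj_congr fun n hn => by rw [coeff_sub_proj hb, if_neg (mem_sdiff.mp hn).2]
  have hunion := proj_add_proj_sdiff (f := f) (e := e) I Λ x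
  rw [union_comm, ← proj_add_proj_sdiff Λ I x] at hunion
  rw [hPB, eq_sub_of_add_eq hunion.symm]
  abel

lemma greedySet_of_abs_eq_one {x : X} {Λ : Finset ℕ} (hx : ∀ n, |f n x| ≤ 1)
    (hΛ : ∀ n ∈ Λ, |f n x| = 1) : GreedySet f x Λ :=
  fun n hn m _ => (hΛ n hn).symm ▸ hx m

lemma greedySet_add_sum_smul (hb : BasisSystem f e) {x : X} (hx : ∀ n, |f n x| ≤ 1)
    {S : Finset ℕ} (hxS : ∀ n ∈ S, f n x = 0) {c : ℕ → ℝ} (hc : ∀ n, |c n| = 1)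
    {Λ : Finset ℕ} (hΛS : Λ ⊆ S) : GreedySet f (x + ∑ n ∈ S, c n • e n) Λ := by
  have hcoeff : ∀ n, f n (x + ∑ n ∈ S, c n • e n) = f n x + if n ∈ S then c n else 0 :=
    fun n => by rw [map_add, coeff_sum_smul hb]
  refine greedySet_of_abs_eq_one (fun n => ?_) fun n hn => ?_
  · rw [hcoeff]
    split_ifs with hn
    · rw [hxS n hn, zero_add, hc]
    · rw [add_zero]; exact hx n
  · rw [hcoeff, if_pos (hΛS hn), hxS n (hΛS hn), zero_add, hc]

lemma GreedySet.erase_of_le {x : X} {Λ : Finset ℕ} (hg : GreedySet f x Λ) {n₀ : ℕ}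
    (hmin : ∀ n ∈ Λ, |f n₀ x| ≤ |f n x|) : GreedySet f x (Λ.erase n₀) := by
  intro n hn m hm
  by_cases hmn : m = n₀
  · exact hmn ▸ hmin n (mem_of_mem_erase hn)
  · exact hg n (mem_of_mem_erase hn) m fun h => hm (mem_erase.mpr ⟨hmn, h⟩)

lemma GreedySet.sdiff_sub_proj (hb : BasisSystem f e) {x : X} {Λ : Finset ℕ}
    (hg : GreedySet f x Λ) (I : Finset ℕ) : GreedySet f (x - proj f e I x) (Λ \ I) := by
  intro n hn m hm
  obtain ⟨hnΛ, hnI⟩ := mem_sdiff.mp hn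
  rw [coeff_sub_proj hb, coeff_sub_proj hb, if_neg hnI]
  split_ifs with hmI
  · simp
  · exact hg n hnΛ m fun h => hm (mem_sdiff.mpr ⟨h, hmI⟩)

lemma GreedySet.union_add_sum_smul (hb : BasisSystem f e) {c : ℝ} (hc : ∀ n, ‖f n‖ ≤ c)
    {x : X} {Λ B : Finset ℕ} (hg : GreedySet f x Λ) (hdisj : Disjoint Λ B) {t : ℝ}
    (ht : 2 * c * ‖x‖ ≤ t) : GreedySet f (x + ∑ n ∈ B, t • e n) (Λ ∪ B) := by
  have hcoeff : ∀ n, f n (x + ∑ n ∈ B, t • e n) = f n x + if n ∈ B then t else 0 := fun n => by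
    rw [map_add, coeff_sum_smul hb B fun _ => t]
  intro n hn k hk
  rw [mem_union, not_or] at hk
  rw [hcoeff k, if_neg hk.2, add_zero, hcoeff n]
  rcases mem_union.mp hn with hn | hn
  · rw [if_neg (disjoint_left.mp hdisj hn), add_zero]; exact hg n hn k hk.1
  · rw [if_pos hn]
    linarith [abs_coeff_le (hc k) x, abs_coeff_le (hc n) x, neg_abs_le (f n x),
      le_abs_self (f n x + t)]

lemma QG.mono {C C' : ℝ} (hq : QG f e C) (h : C ≤ C') : QG f e C' :=
  fun x Λ hg => (hq x Λ hg).trans (mul_le_mul_of_nonneg_right h (norm_nonneg x))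

lemma QG.suppQG {C : ℝ} (hq : QG f e C) : SuppQG f e (1 + C) := fun x Λ hg => by
  linarith [norm_sub_le x (proj f e Λ x), hq x Λ hg]

lemma SuppQG.qg {C : ℝ} (hs : SuppQG f e C) : QG f e (1 + C) := fun x Λ hg => by
  have h := norm_sub_le x (x - proj f e Λ x)
  rw [sub_sub_cancel] at h
  linarith [hs x Λ hg]

lemma SuppQG.norm_add_sum_subset_le (hb : BasisSystem f e) {K : ℝ} (hs : SuppQG f e K) {x : X}
    (hx : ∀ n, |f n x| ≤ 1) {δ : ℕ → ℝ} (hδ : ∀ n, |δ n| = 1) {B B' : Finset ℕ}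
    (hB' : B' ⊆ B) (hxB : ∀ n ∈ B, f n x = 0) :
    ‖x + ∑ n ∈ B', δ n • e n‖ ≤ K * ‖x + ∑ n ∈ B, δ n • e n‖ := by
  have h := hs _ _ (greedySet_add_sum_smul hb hx hxB hδ (sdiff_subset (s := B) (t := B')))
  rwa [add_sum_smul_sub_proj hb sdiff_subset fun n hn => hxB n (sdiff_subset hn),
    Finset.sdiff_sdiff_eq_self hB'] at h

lemma QG.norm_smul_sum_unitSign_sub_proj_le {C : ℝ} (hq : QG f e C) (hC : 0 ≤ C) {v : X}
    (Γ : Finset ℕ) (hg : GreedySet f v Γ) {t : ℝ} (ht : 0 ≤ t) (htΓ : ∀ n ∈ Γ, t ≤ |f n v|) :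
    ‖t • ∑ n ∈ Γ, unitSign (f n v) • e n - proj f e Γ v‖ ≤ C * ‖v‖ := by
  induction Γ using Finset.strongInduction generalizing t with
  | H Γ ih =>
    rcases Γ.eq_empty_or_nonempty with rfl | hne
    · simp only [sum_empty, smul_zero, proj, zero_sub, norm_neg, norm_zero]
      positivity
    obtain ⟨n₀, hn₀, hmin⟩ := Γ.exists_min_image (fun n => |f n v|) hne
    -- at the level `|f n₀ v|` the `n₀`-terms of the signed sum and of `P_Γ v` coincide
    have hdrop : |f n₀ v| • ∑ n ∈ Γ, unitSign (f n v) • e n - proj f e Γ v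
        = |f n₀ v| • ∑ n ∈ Γ.erase n₀, unitSign (f n v) • e n - proj f e (Γ.erase n₀) v := by
      rw [proj, proj, ← add_sum_erase Γ _ hn₀, ← add_sum_erase Γ (fun n => f n v • e n) hn₀,
        smul_add, smul_smul, abs_mul_unitSign]
      abel
    have hmin_level :
        ‖-proj f e Γ v + |f n₀ v| • ∑ n ∈ Γ, unitSign (f n v) • e n‖ ≤ C * ‖v‖ := by
      rw [neg_add_eq_sub, hdrop]
      exact ih _ (erase_ssubset hn₀) (hg.erase_of_le hmin) (abs_nonneg _)
        fun n hn => hmin n (mem_of_mem_erase hn)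
    have hzero_level :
        ‖-proj f e Γ v + (0 : ℝ) • ∑ n ∈ Γ, unitSign (f n v) • e n‖ ≤ C * ‖v‖ := by
      rw [zero_smul, add_zero, norm_neg]; exact hq v Γ hg
    rw [sub_eq_neg_add]
    exact (norm_add_smul_le_max _ _ ⟨ht, htΓ n₀ hn₀⟩).trans (max_le hzero_level hmin_level)

lemma QG.norm_smul_sum_unitSign_le {C : ℝ} (hq : QG f e C) (hC : 0 ≤ C) {v : X}
    {Γ : Finset ℕ} (hg : GreedySet f v Γ) {t : ℝ} (ht : 0 ≤ t) (htΓ : ∀ n ∈ Γ, t ≤ |f n v|) :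
    ‖t • ∑ n ∈ Γ, unitSign (f n v) • e n‖ ≤ 2 * C * ‖v‖ := by
  have h := norm_add_le (t • ∑ n ∈ Γ, unitSign (f n v) • e n - proj f e Γ v) (proj f e Γ v)
  rw [sub_add_cancel] at h
  linarith [hq.norm_smul_sum_unitSign_sub_proj_le hC Γ hg ht htΓ, hq v Γ hg]

lemma checkSigma_le {Λ I : Finset ℕ} {m : ℕ} (x : X)
    (hI : I = ∅ ∨ ∃ a b : ℕ, a ≤ b ∧ I = Icc a b ∧ ∀ n ∈ Λ, n ≤ b) (hm : I.card ≤ m) :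
    checkSigma f e Λ m x ≤ ‖x - proj f e I x‖ :=
  csInf_le ⟨0, by rintro _ ⟨J, -, -, rfl⟩; positivity⟩ ⟨I, hI, hm, rfl⟩

lemma checkSigma_le_norm (Λ : Finset ℕ) (m : ℕ) (x : X) : checkSigma f e Λ m x ≤ ‖x‖ := by
  simpa [proj] using checkSigma_le (f := f) (e := e) (Λ := Λ) x (Or.inl rfl) (Nat.zero_le m)

lemma le_mul_checkSigma {K r : ℝ} (hK : 0 < K) {Λ : Finset ℕ} {m : ℕ} {x : X}
    (h : ∀ I : Finset ℕ, (I = ∅ ∨ ∃ a b : ℕ, a ≤ b ∧ I = Icc a b ∧ ∀ n ∈ Λ, n ≤ b) →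
      I.card ≤ m → r ≤ K * ‖x - proj f e I x‖) :
    r ≤ K * checkSigma f e Λ m x := by
  rw [← div_le_iff₀' hK]
  refine le_csInf ⟨_, ∅, Or.inl rfl, by simp, rfl⟩ ?_
  rintro _ ⟨I, hI, hm, rfl⟩
  rw [div_le_iff₀' hK]
  exact h I hI hm

lemma RPSLC.norm_add_sum_smul_le {l Δ : ℝ} (hsl : RPSLC f e l Δ) (hΔ : 1 ≤ Δ) {z : X} {t : ℝ}
    (ht : 0 ≤ t) (hz : ∀ n, |f n z| ≤ t) {a δ : ℕ → ℝ} {A B : Finset ℕ}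
    (ha : ∀ n ∈ A, |a n| ≤ t) (hδ : ∀ n, |δ n| = 1)
    (hcard : (l - 1) * spread A + (A.card : ℝ) ≤ (B.card : ℝ)) (hzB : ∀ n ∈ B, f n z = 0)
    (hBA : ∀ b ∈ B, ∀ a ∈ A, b < a) (hsurr : Surrounds f z A) :
    ‖z + ∑ n ∈ A, a n • e n‖ ≤ Δ * ‖z + t • ∑ n ∈ B, δ n • e n‖ := by
  obtain ⟨ε, hε, hsign⟩ := exists_sign_norm_add_sum_smul_le e a A z ha
  refine hsign.trans ?_
  rcases ht.eq_or_lt with rfl | ht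
  · simp only [zero_smul, add_zero]
    exact le_mul_of_one_le_left (norm_nonneg z) hΔ
  have hw : ∀ n, f n (t⁻¹ • z) = t⁻¹ * f n z := fun n => by rw [map_smul, smul_eq_mul]
  have key := hsl (t⁻¹ • z)
    (fun n => by
      rw [hw, abs_mul, abs_inv, abs_of_pos ht]
      exact inv_mul_le_one_of_le₀ (hz n) ht.le)
    ε δ hε hδ A B hcard (fun n hn => by rw [hw, hzB n hn, mul_zero]) hBA
    (fun a ha b hb n h1 h2 => by rw [hw, hsurr a ha b hb n h1 h2, mul_zero])
  have hscale : ∀ w : X, z + t • w = t • (t⁻¹ • z + w) := fun w => by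
    rw [smul_add, smul_inv_smul₀ ht.ne']
  rw [hscale, hscale, norm_smul, norm_smul, Real.norm_eq_abs, abs_of_pos ht, mul_left_comm]
  exact mul_le_mul_of_nonneg_left key ht.le

lemma norm_sub_proj_le_of_Icc (hb : BasisSystem f e) {l Cq Δ : ℝ} (hl : 1 ≤ l)
    (hq : QG f e Cq) (hCq : 0 ≤ Cq) (hsl : RPSLC f e l Δ) (hΔ : 1 ≤ Δ) {x : X} {m : ℕ}
    {Λ : Finset ℕ} (hcard : Λ.card = ⌈l * (m : ℝ)⌉₊) (hg : GreedySet f x Λ) {a b : ℕ}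
    (hΛb : ∀ n ∈ Λ, n ≤ b) (hm : (Icc a b).card ≤ m) :
    ‖x - proj f e Λ x‖ ≤ Δ * (1 + 3 * Cq) * ‖x - proj f e (Icc a b) x‖ := by
  set I := Icc a b
  set y := x - proj f e I x
  set B := Λ \ I
  set E := I \ Λ
  set z := y - proj f e B y
  have hz : ∀ n, f n z = if n ∈ Λ ∪ I then 0 else f n x := fun n => by
    rw [coeff_sub_proj_sub_proj hb, sdiff_union_self_eq_union]
  have hgB : GreedySet f y B := hg.sdiff_sub_proj hb I
  have hdecomp : x - proj f e Λ x = z + proj f e E x :=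
    sub_proj_eq_sub_proj_sdiff_add_proj_sdiff hb Λ I x
  have hcardE : (l - 1) * spread E + (E.card : ℝ) ≤ B.card :=
    sub_one_mul_spread_sdiff_add_card_le hl (hcard ▸ Nat.le_ceil _) hm
  have hsurr : Surrounds f z E := fun a' ha' b' hb' n h1 h2 => by
    have ha' := mem_Icc.mp (mem_sdiff.mp ha').1
    have hb' := mem_Icc.mp (mem_sdiff.mp hb').1
    rw [hz, if_pos (mem_union_right _ (mem_Icc.mpr ⟨by omega, by omega⟩))]
  have hz_norm : ‖z‖ ≤ (1 + Cq) * ‖y‖ := hq.suppQG y B hgB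
  rcases B.eq_empty_or_nonempty with hB0 | hBne
  · have hE0 : E = ∅ := by
      rw [hB0, card_empty, Nat.cast_zero] at hcardE
      have := mul_nonneg (sub_nonneg.mpr hl) (Nat.cast_nonneg (α := ℝ) (spread E))
      exact card_eq_zero.mp (Nat.le_zero.mp (by exact_mod_cast (show (E.card : ℝ) ≤ 0 by linarith)))
    rw [hdecomp, hE0, proj, sum_empty, add_zero]
    exact hz_norm.trans (mul_le_mul_of_nonneg_right (by nlinarith) (norm_nonneg y))
  obtain ⟨n₀, hn₀, hmin⟩ := B.exists_min_image (fun n => |f n x|) hBne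
  have hn₀Λ : n₀ ∈ Λ := (mem_sdiff.mp hn₀).1
  have hzt : ∀ n, |f n z| ≤ |f n₀ x| := fun n => by
    rw [hz]
    split_ifs with hn
    · simp
    · exact hg n₀ hn₀Λ n fun h => hn (mem_union_left _ h)
  have htB : ∀ n ∈ B, |f n₀ x| ≤ |f n y| := fun n hn => by
    rw [coeff_sub_proj hb, if_neg (mem_sdiff.mp hn).2]; exact hmin n hn
  calc ‖x - proj f e Λ x‖ = ‖z + ∑ n ∈ E, f n x • e n‖ := by rw [hdecomp, proj]
    _ ≤ Δ * ‖z + |f n₀ x| • ∑ n ∈ B, unitSign (f n y) • e n‖ :=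
        hsl.norm_add_sum_smul_le hΔ (abs_nonneg _) hzt
          (fun n hn => hg n₀ hn₀Λ n (mem_sdiff.mp hn).2) (fun n => abs_unitSign _) hcardE
          (fun n hn => by rw [hz, if_pos (mem_union_left _ (mem_sdiff.mp hn).1)])
          (fun n hn k hk => lt_of_mem_sdiff_Icc_of_mem_Icc_sdiff hΛb hn hk) hsurr
    _ ≤ Δ * ((1 + Cq) * ‖y‖ + 2 * Cq * ‖y‖) := by
        gcongr
        exact (norm_add_le _ _).trans
          (add_le_add hz_norm (hq.norm_smul_sum_unitSign_le hCq hgB (abs_nonneg _) htB))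
    _ = Δ * (1 + 3 * Cq) * ‖y‖ := by ring

lemma QG.rpgii_of_rpslc (hb : BasisSystem f e) {l Cq Δ : ℝ}
    (hl : 1 ≤ l) (hq : QG f e Cq) (hCq : 0 ≤ Cq) (hsl : RPSLC f e l Δ) (hΔ : 1 ≤ Δ) :
    RPGII f e l (Δ * (1 + 3 * Cq)) := by
  intro x m Λ hcard hg
  refine le_mul_checkSigma (by positivity) fun I hI hIm => ?_
  rcases hI with rfl | ⟨a, b, -, rfl, hΛb⟩
  · simp only [proj, sum_empty, sub_zero]
    exact (hq.suppQG x Λ hg).trans (mul_le_mul_of_nonneg_right (by nlinarith) (norm_nonneg x))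
  · exact norm_sub_proj_le_of_Icc hb hl hq hCq hsl hΔ hcard hg hΛb hIm

lemma RPGII.suppQG (hb : BasisSystem f e) {l C c : ℝ} (hl : 0 < l) (hC : 0 ≤ C)
    (hc : ∀ n, ‖e n‖ ≤ c ∧ ‖f n‖ ≤ c) (hR : RPGII f e l C) :
    SuppQG f e (C + (2 * C + 1) * l * c ^ 2) := by
  intro x Λ hg
  obtain ⟨m, hkm, hmk⟩ := exists_le_ceil_mul_le hl Λ.card
  set d := ⌈l * m⌉₊ - Λ.card
  have hd : (d : ℝ) ≤ l := by rw [Nat.cast_sub hkm]; linarith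
  set B := Icc (Λ.sup id + 1) (Λ.sup id + d)
  have hBcard : B.card = d := by simp only [B, Nat.card_Icc]; omega
  have hdisj : Disjoint Λ B := disjoint_left.mpr fun n hn hnB => by
    have := le_sup (f := id) hn
    simp only [B, mem_Icc, id] at hnB this
    omega
  have hc0 : 0 ≤ c := (norm_nonneg _).trans (hc 0).1
  set t := 2 * c * ‖x‖
  set z := x + ∑ n ∈ B, t • e n
  have hcard : (Λ ∪ B).card = ⌈l * m⌉₊ := by
    rw [card_union_of_disjoint hdisj, hBcard]; omega
  have hgz : GreedySet f z (Λ ∪ B) := hg.union_add_sum_smul hb (fun n => (hc n).2) hdisj le_rfl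
  have hsplit : x - proj f e Λ x = (z - proj f e (Λ ∪ B) z) + proj f e (B \ Λ) x := by
    simp only [z]
    rw [proj_add, proj_sum_smul hb, inter_eq_right.mpr subset_union_right,
      ← proj_add_proj_sdiff Λ B x]
    abel
  have hz : ‖z‖ ≤ ‖x‖ + d * (t * c) := by
    have := norm_sum_smul_le (fun n => (hc n).1) B (a := fun _ => t) (K := t)
      fun n _ => (abs_of_nonneg (by positivity)).le
    rw [hBcard] at this
    linarith [norm_add_le x (∑ n ∈ B, t • e n)]
  have hPB : ‖proj f e (B \ Λ) x‖ ≤ d * (c * ‖x‖ * c) := by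
    refine (norm_proj_le hc _ x).trans (mul_le_mul_of_nonneg_right ?_ (by positivity))
    exact_mod_cast hBcard ▸ card_le_card sdiff_subset
  calc ‖x - proj f e Λ x‖ ≤ ‖z - proj f e (Λ ∪ B) z‖ + ‖proj f e (B \ Λ) x‖ := by
        rw [hsplit]; exact norm_add_le _ _
    _ ≤ C * ‖z‖ + d * (c * ‖x‖ * c) :=
        add_le_add ((hR z m _ hcard hgz).trans
          (mul_le_mul_of_nonneg_left (checkSigma_le_norm _ _ _) hC)) hPB
    _ ≤ C * (‖x‖ + d * (t * c)) + d * (c * ‖x‖ * c) := by gcongr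
    _ = C * ‖x‖ + (2 * C + 1) * d * c ^ 2 * ‖x‖ := by ring
    _ ≤ C * ‖x‖ + (2 * C + 1) * l * c ^ 2 * ‖x‖ := by gcongr
    _ = (C + (2 * C + 1) * l * c ^ 2) * ‖x‖ := by ring

lemma RPGII.norm_add_sum_le_of_nonempty (hb : BasisSystem f e) {l C : ℝ} (hl : 1 ≤ l)
    (hC : 0 ≤ C) (hR : RPGII f e l C) {x : X} (hx : ∀ n, |f n x| ≤ 1) {ε δ : ℕ → ℝ}
    (hε : ∀ n, |ε n| = 1) (hδ : ∀ n, |δ n| = 1) {A B' : Finset ℕ} (hA : A.Nonempty)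
    (hB'card : B'.card = ⌈(l - 1) * spread A⌉₊ + A.card) (hxB' : ∀ n ∈ B', f n x = 0)
    (hB'A : ∀ b ∈ B', ∀ a ∈ A, b < a) (hsurr : Surrounds f x A) :
    ‖x + ∑ n ∈ A, ε n • e n‖ ≤ C * ‖x + ∑ n ∈ B', δ n • e n‖ := by
  set Ic := Icc (A.min' hA) (A.max' hA)
  have hAIc : A ⊆ Ic := fun n hn => mem_Icc.mpr ⟨min'_le A n hn, le_max' A n hn⟩
  have hxIc : ∀ n ∈ Ic, f n x = 0 := fun n hn =>
    hsurr _ (min'_mem A hA) _ (max'_mem A hA) n (mem_Icc.mp hn).1 (mem_Icc.mp hn).2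
  have hB'Ic : Disjoint B' Ic := disjoint_left.mpr fun n hn hnIc =>
    (not_le.mpr (hB'A n hn _ (min'_mem A hA))) (mem_Icc.mp hnIc).1
  set c : ℕ → ℝ := fun n => if n ∈ A then ε n else if n ∈ Ic then 1 else δ n
  set S := Ic ∪ B'
  set u := x + ∑ n ∈ S, c n • e n
  have hxS : ∀ n ∈ S, f n x = 0 := fun n hn => (mem_union.mp hn).elim (hxIc n) (hxB' n)
  have hc : ∀ n, |c n| = 1 := fun n => by
    simp only [c]; split_ifs <;> simp [hε, hδ]
  set Λ := B' ∪ (Ic \ A)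
  have hΛS : Λ ⊆ S := union_subset subset_union_right (sdiff_subset.trans subset_union_left)
  have hΛmax : ∀ n ∈ Λ, n ≤ A.max' hA := fun n hn => by
    rcases mem_union.mp hn with hn | hn
    · exact (hB'A n hn _ (max'_mem A hA)).le
    · exact (mem_Icc.mp (mem_sdiff.mp hn).1).2
  have hSΛ : S \ Λ = A := by
    ext n
    have h1 := @hAIc n
    have h2 : n ∈ B' → n ∉ Ic := fun h => disjoint_left.mp hB'Ic h
    simp only [S, Λ, Finset.mem_sdiff, Finset.mem_union]
    tauto
  have hSIc : S \ Ic = B' := by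
    rw [union_sdiff_left, sdiff_eq_self_of_disjoint hB'Ic]
  have hcA : ∑ n ∈ A, c n • e n = ∑ n ∈ A, ε n • e n :=
    sum_congr rfl fun n hn => by simp only [c, if_pos hn]
  have hcB' : ∑ n ∈ B', c n • e n = ∑ n ∈ B', δ n • e n := sum_congr rfl fun n hn => by
    have hnIc := disjoint_left.mp hB'Ic hn
    simp only [c, if_neg hnIc, if_neg fun h => hnIc (hAIc h)]
  calc ‖x + ∑ n ∈ A, ε n • e n‖ = ‖u - proj f e Λ u‖ := by
        rw [add_sum_smul_sub_proj hb hΛS fun n hn => hxS n (hΛS hn), hSΛ, hcA]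
    _ ≤ C * checkSigma f e Λ (spread A) u :=
        hR u _ Λ (card_union_Icc_sdiff hl hA hB'card hB'Ic)
          (greedySet_add_sum_smul hb hx hxS hc hΛS)
    _ ≤ C * ‖u - proj f e Ic u‖ := mul_le_mul_of_nonneg_left (checkSigma_le u
        (Or.inr ⟨_, _, min'_le_max' A hA, rfl, hΛmax⟩) (spread_eq_card_Icc hA).ge) hC
    _ = C * ‖x + ∑ n ∈ B', δ n • e n‖ := by
        rw [add_sum_smul_sub_proj hb subset_union_left hxIc, hSIc, hcB']

lemma RPGII.rpslc (hb : BasisSystem f e) {l C K : ℝ} (hl : 1 ≤ l) (hC : 1 ≤ C)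
    (hR : RPGII f e l C) (hs : SuppQG f e K) : RPSLC f e l (C * K) := by
  intro x hx ε δ hε hδ A B hcard hxB hBA hsurr
  rcases A.eq_empty_or_nonempty with rfl | hA
  · have h := hs.norm_add_sum_subset_le hb hx hδ (empty_subset B) hxB
    simp only [sum_empty, add_zero] at h ⊢
    rw [mul_assoc]
    exact h.trans (le_mul_of_one_le_left ((norm_nonneg x).trans h) hC)
  have hB' : ⌈(l - 1) * spread A⌉₊ + A.card ≤ B.card := by
    have hspread : 0 ≤ (l - 1) * spread A := mul_nonneg (sub_nonneg.mpr hl) (Nat.cast_nonneg _)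
    have hAB : A.card ≤ B.card := by exact_mod_cast (show (A.card : ℝ) ≤ B.card by linarith)
    have := Nat.ceil_le.mpr (show (l - 1) * spread A ≤ ((B.card - A.card : ℕ) : ℝ) by
      rw [Nat.cast_sub hAB]; linarith)
    omega
  obtain ⟨B', hB'B, hB'card⟩ := exists_subset_card_eq hB'
  calc ‖x + ∑ n ∈ A, ε n • e n‖ ≤ C * ‖x + ∑ n ∈ B', δ n • e n‖ :=
        hR.norm_add_sum_le_of_nonempty hb hl (by linarith) hx hε hδ hA hB'card
          (fun n hn => hxB n (hB'B hn)) (fun b hb a ha => hBA b (hB'B hb) a ha) hsurr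
    _ ≤ C * (K * ‖x + ∑ n ∈ B, δ n • e n‖) :=
        mul_le_mul_of_nonneg_left (hs.norm_add_sum_subset_le hb hx hδ hB'B hxB) (by linarith)
    _ = C * K * ‖x + ∑ n ∈ B, δ n • e n‖ := (mul_assoc _ _ _).symm

end

theorem stmt_9_general (f : ℕ → X →L[ℝ] ℝ) (e : ℕ → X)
    (hb : BasisSystem f e) (l : ℝ) (hl : 1 ≤ l) :
    (∃ C : ℝ, 1 ≤ C ∧ RPGII f e l C) ↔
      ((∃ Cq : ℝ, QG f e Cq) ∧ ∃ Δ : ℝ, 1 ≤ Δ ∧ RPSLC f e l Δ) := by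
  obtain ⟨_, c, -, hc⟩ := hb.bounded
  have hc' : ∀ n, ‖e n‖ ≤ c ∧ ‖f n‖ ≤ c := fun n => (hc n).2
  constructor
  · rintro ⟨C, hC, hR⟩
    have hs := hR.suppQG hb (by linarith) (by linarith) hc'
    have hK : 0 ≤ (2 * C + 1) * l * c ^ 2 := by positivity
    exact ⟨⟨_, hs.qg⟩, _, by nlinarith, hR.rpslc hb hl hC hs⟩
  · rintro ⟨⟨Cq, hq⟩, Δ, hΔ, hsl⟩
    have hCq := le_max_right Cq 0
    exact ⟨_, by nlinarith, (hq.mono (le_max_left Cq 0)).rpgii_of_rpslc hb hl hCq hsl hΔ⟩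

/-- a basis is (λ, RPGII) iff it is quasi-greedy and (λ, RPSLC). -/
theorem stmt_9 [CompleteSpace X] (f : ℕ → X →L[ℝ] ℝ) (e : ℕ → X)
    (hb : BasisSystem f e) (l : ℝ) (hl : 1 ≤ l) :
    (∃ C : ℝ, 1 ≤ C ∧ RPGII f e l C) ↔
      ((∃ Cq : ℝ, QG f e Cq) ∧ ∃ Δ : ℝ, 1 ≤ Δ ∧ RPSLC f e l Δ) :=
  stmt_9_general f e hb l hl
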